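/- arXiv:2006.11666 — 3 statements merged into one kernel-verified Lean document; each statement's English description precedes it below -/
import Mathlib

section
/- Let y^{(1)},...,y^{(r)} ∈ {0,1}^n be indicator vectors of r pairwise disjoint subsets of [n], each of size k ≥ 1, and let Y* = Σ_{i=1}^r (y^{(i)})^{⊗m}. Then the tensor spectral norm of Y* equals k^{m/2}. -/
open scoped BigOperators

noncomputable section

def tInner {n m : ℕ} (A B : (Fin m → Fin n) → ℝ) : ℝ :=
  ∑ i : Fin m → Fin n, A i * B i

def rankOne (n m : ℕ) (u : EuclideanSpace ℝ (Fin n)) : (Fin m → Fin n) → ℝ :=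
  fun i => ∏ j : Fin m, u (i j)

def specNorm {n m : ℕ} (A : (Fin m → Fin n) → ℝ) : ℝ :=
  sSup {x | ∃ u : EuclideanSpace ℝ (Fin n), ‖u‖ = 1 ∧ x = |tInner A (rankOne n m u)|}

/-!
Writing `⟨Y*, u^{⊗m}⟩ = ∑ᵢ aᵢ^m` with `aᵢ = ⟨y⁽ⁱ⁾, u⟩`, Cauchy–Schwarz on each block and the
disjointness of the blocks give `∑ᵢ aᵢ² ≤ k ‖u‖² = k`; since `m ≥ 2` the `ℓ^m` norm of `a` is at
most its `ℓ²` norm, so `|∑ᵢ aᵢ^m| ≤ k^{m/2}`. Equality holds at `u = y⁽¹⁾ / √k`.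
-/

open Finset

section

variable {ι κ : Type*} [Fintype ι] [Fintype κ]

theorem tInner_sum_rankOne {n m : ℕ} (y : ι → Fin n → ℝ) (u : EuclideanSpace ℝ (Fin n)) :
    tInner (fun idx : Fin m → Fin n => ∑ i, ∏ t, y i (idx t)) (rankOne n m u) =
      ∑ i, (∑ j, y i j * u j) ^ m := by
  unfold tInner rankOne
  simp_rw [sum_mul, ← prod_mul_distrib]
  rw [sum_comm]
  exact sum_congr rfl fun i _ => (Fintype.sum_pow (fun j => y i j * u j) m).symm

theorem sum_abs_pow_le_one_of_sum_sq_le_one {b : ι → ℝ} {m : ℕ} (hm : 2 ≤ m)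
    (hb : ∑ i, b i ^ 2 ≤ 1) : ∑ i, |b i| ^ m ≤ 1 := by
  have hle : ∀ i, |b i| ≤ 1 := fun i => by
    rw [← sq_le_one_iff_abs_le_one]
    exact (single_le_sum (fun j _ => sq_nonneg (b j)) (mem_univ i)).trans hb
  calc ∑ i, |b i| ^ m ≤ ∑ i, |b i| ^ 2 :=
        sum_le_sum fun i _ => pow_le_pow_of_le_one (abs_nonneg _) (hle i) hm
    _ = ∑ i, b i ^ 2 := by simp_rw [sq_abs]
    _ ≤ 1 := hb

theorem abs_sum_pow_le_of_sum_sq_le {a : ι → ℝ} {s : ℝ} {m : ℕ} (hs : 0 < s) (hm : 2 ≤ m)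
    (ha : ∑ i, a i ^ 2 ≤ s ^ 2) : |∑ i, a i ^ m| ≤ s ^ m := by
  have hb : ∑ i, (a i / s) ^ 2 ≤ 1 := by
    simp_rw [div_pow, ← sum_div]
    exact div_le_one_of_le₀ ha (by positivity)
  calc |∑ i, a i ^ m| ≤ ∑ i, |a i| ^ m := by
        simpa only [abs_pow] using abs_sum_le_sum_abs (fun i => a i ^ m) univ
    _ = s ^ m * ∑ i, |a i / s| ^ m := by
        rw [mul_sum]
        refine sum_congr rfl fun i _ => ?_
        rw [abs_div, abs_of_pos hs, div_pow, mul_div_cancel₀ _ (by positivity)]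
    _ ≤ s ^ m * 1 := by gcongr; exact sum_abs_pow_le_one_of_sum_sq_le_one hm hb
    _ = s ^ m := mul_one _

theorem sum_sq_sum_mul_le_mul_sum_sq (y : ι → κ → ℝ) (u : κ → ℝ) {c : ℝ} (hc : 0 ≤ c)
    (hy : ∀ i j, 0 ≤ y i j) (hrow : ∀ i, ∑ j, y i j ≤ c) (hcol : ∀ j, ∑ i, y i j ≤ 1) :
    ∑ i, (∑ j, y i j * u j) ^ 2 ≤ c * ∑ j, u j ^ 2 := by
  have hblock : ∀ i, (∑ j, y i j * u j) ^ 2 ≤ c * ∑ j, y i j * u j ^ 2 := fun i =>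
    calc (∑ j, y i j * u j) ^ 2 ≤ (∑ j, y i j) * ∑ j, y i j * u j ^ 2 :=
          sum_sq_le_sum_mul_sum_of_sq_le_mul _ (fun j _ => hy i j)
            (fun j _ => mul_nonneg (hy i j) (sq_nonneg _)) (fun j _ => le_of_eq (by ring))
      _ ≤ c * ∑ j, y i j * u j ^ 2 :=
          mul_le_mul_of_nonneg_right (hrow i)
            (sum_nonneg fun j _ => mul_nonneg (hy i j) (sq_nonneg _))
  calc ∑ i, (∑ j, y i j * u j) ^ 2 ≤ ∑ i, c * ∑ j, y i j * u j ^ 2 :=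
        sum_le_sum fun i _ => hblock i
    _ = c * ∑ j, (∑ i, y i j) * u j ^ 2 := by rw [← mul_sum, sum_comm]; simp_rw [sum_mul]
    _ ≤ c * ∑ j, u j ^ 2 := by
        gcongr with j
        exact mul_le_of_le_one_left (sq_nonneg _) (hcol j)

omit [Fintype κ] in
theorem sum_indicators_le_one {y : ι → κ → ℝ}
    (h01 : ∀ i j, y i j = 0 ∨ y i j = 1) (hdisj : ∀ i i', i ≠ i' → ∀ j, y i j * y i' j = 0)
    (j : κ) : ∑ i, y i j ≤ 1 := by
  by_cases h : ∃ i₀, y i₀ j = 1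
  · obtain ⟨i₀, hi₀⟩ := h
    rw [sum_eq_single i₀ (fun i _ hi => by simpa [hi₀] using hdisj i i₀ hi j) (by simp), hi₀]
  · simp [fun i => (h01 i j).resolve_right (not_exists.mp h i)]

omit [Fintype ι] in
theorem sum_indicator_mul_indicator [DecidableEq ι] {y : ι → κ → ℝ} {k : ℝ}
    (h01 : ∀ i j, y i j = 0 ∨ y i j = 1) (hdisj : ∀ i i', i ≠ i' → ∀ j, y i j * y i' j = 0)
    (hsize : ∀ i, ∑ j, y i j = k) (i i' : ι) :
    ∑ j, y i j * y i' j = if i = i' then k else 0 := by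
  split_ifs with h
  · subst h
    rw [← hsize i]
    exact sum_congr rfl fun j _ => by rcases h01 i j with h | h <;> simp [h]
  · exact sum_eq_zero fun j _ => hdisj i i' h j

theorem exists_norm_eq_one_sum_pow_eq {n m : ℕ} (hm : m ≠ 0) {y : ι → Fin n → ℝ} {k : ℝ}
    (hk : 0 < k) (h01 : ∀ i j, y i j = 0 ∨ y i j = 1)
    (hdisj : ∀ i i', i ≠ i' → ∀ j, y i j * y i' j = 0) (hsize : ∀ i, ∑ j, y i j = k) (i₀ : ι) :
    ∃ u : EuclideanSpace ℝ (Fin n), ‖u‖ = 1 ∧ ∑ i, (∑ j, y i j * u j) ^ m = √k ^ m := by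
  classical
  have hgram := sum_indicator_mul_indicator h01 hdisj hsize
  have hsqrt : 0 < √k := Real.sqrt_pos.2 hk
  refine ⟨(√k)⁻¹ • WithLp.toLp 2 (y i₀), ?_, ?_⟩
  · rw [norm_smul, EuclideanSpace.norm_eq]
    simp_rw [Real.norm_eq_abs, sq_abs, sq]
    rw [hgram, if_pos rfl, abs_of_pos (inv_pos.2 hsqrt), inv_mul_cancel₀ hsqrt.ne']
  · simp only [PiLp.smul_apply, smul_eq_mul, mul_left_comm _ (√k)⁻¹, ← mul_sum, hgram]
    rw [sum_eq_single i₀ (fun i _ hi => by simp [hi, zero_pow hm]) (by simp), if_pos rfl,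
      inv_mul_eq_div, Real.div_sqrt]

end

theorem specNorm_agreement (n r k m : ℕ) (hr : 1 ≤ r) (hk : 1 ≤ k) (hm : 2 ≤ m)
    (y : Fin r → Fin n → ℝ)
    (h01 : ∀ i j, y i j = 0 ∨ y i j = 1)
    (hdisj : ∀ i i', i ≠ i' → ∀ j, y i j * y i' j = 0)
    (hsize : ∀ i, ∑ j : Fin n, y i j = (k : ℝ)) :
    specNorm (fun idx : Fin m → Fin n => ∑ i : Fin r, ∏ t : Fin m, y i (idx t)) =
      (k : ℝ) ^ ((m : ℝ) / 2) := by
  have hk0 : (0 : ℝ) < k := by exact_mod_cast hk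
  have hsqrt : √(k : ℝ) ^ m = (k : ℝ) ^ ((m : ℝ) / 2) := by
    rw [Real.sqrt_eq_rpow, ← Real.rpow_mul_natCast hk0.le]
    ring_nf
  rw [← hsqrt]
  refine IsGreatest.csSup_eq ⟨?_, ?_⟩
  · obtain ⟨u, hu, hval⟩ :=
      exists_norm_eq_one_sum_pow_eq (m := m) (by omega) hk0 h01 hdisj hsize ⟨0, hr⟩
    exact ⟨u, hu, by rw [tInner_sum_rankOne, hval, abs_of_nonneg (by positivity)]⟩
  · rintro _ ⟨u, hu, rfl⟩
    rw [tInner_sum_rankOne]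
    refine abs_sum_pow_le_of_sum_sq_le (Real.sqrt_pos.2 hk0) hm ?_
    have hy : ∀ i j, 0 ≤ y i j := fun i j => by rcases h01 i j with h | h <;> simp [h]
    calc ∑ i, (∑ j, y i j * u j) ^ 2 ≤ k * ∑ j, u j ^ 2 :=
          sum_sq_sum_mul_le_mul_sum_sq y u hk0.le hy (fun i => (hsize i).le)
            (sum_indicators_le_one h01 hdisj)
      _ = √(k : ℝ) ^ 2 := by
          rw [← EuclideanSpace.real_norm_sq_eq, hu, Real.sq_sqrt hk0.le, one_pow, mul_one]
end
end

section
/- Let y^{(1)},...,y^{(r)} ∈ {0,1}^n be indicator vectors of r pairwise disjoint subsets of [n], each of size k ≥ 1, and let Y* = Σ_{i=1}^r (y^{(i)})^{⊗m} with m ≥ 2. Then the tensor nuclear norm of Y* equals r·k^{m/2}. -/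
/-!
With `w i = y i / √k`, the vectors `w i` are orthonormal and `Y* = ∑ i, k^(m/2) • (w i)^⊗m`, which
gives `‖Y*‖_* ≤ r k^(m/2)`. For the reverse inequality, `T = ∑ i, (w i)^⊗m` pairs with a unit
`u^⊗m` to `∑ i, ⟪w i, u⟫^m`, whose absolute value is at most `∑ i, ⟪w i, u⟫^2 ≤ 1` by Bessel's
inequality (as `m ≥ 2`); so `T` has spectral norm at most one while `⟨T, Y*⟩ = r k^(m/2)`.
-/

open scoped BigOperators

noncomputable section

/-- Tensor nuclear norm: infimum of `Σ |λ_i|` over decompositions into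
symmetric rank-one tensors with unit vectors. -/
def nucNorm {n m : ℕ} (B : (Fin m → Fin n) → ℝ) : ℝ :=
  sInf {s | ∃ (q : ℕ) (lam : Fin q → ℝ) (u : Fin q → EuclideanSpace ℝ (Fin n)),
    (∀ i, ‖u i‖ = 1) ∧ B = ∑ i : Fin q, lam i • rankOne n m (u i) ∧
    s = ∑ i : Fin q, |lam i|}

open Finset
open scoped RealInnerProductSpace

section NuclearNorm

variable {n m : ℕ}

lemma rankOne_smul (c : ℝ) (u : EuclideanSpace ℝ (Fin n)) :
    rankOne n m (c • u) = c ^ m • rankOne n m u := by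
  ext idx
  simp [rankOne, prod_mul_distrib]

lemma tInner_rankOne_rankOne (u v : EuclideanSpace ℝ (Fin n)) :
    tInner (rankOne n m u) (rankOne n m v) = ⟪u, v⟫ ^ m := by
  simp only [tInner, rankOne, PiLp.inner_apply, RCLike.inner_apply, conj_trivial,
    Fintype.sum_pow, ← prod_mul_distrib, mul_comm]

lemma tInner_sum_smul_left {q : ℕ} (lam : Fin q → ℝ) (A : Fin q → (Fin m → Fin n) → ℝ)
    (B : (Fin m → Fin n) → ℝ) :
    tInner (∑ i, lam i • A i) B = ∑ i, lam i * tInner (A i) B := by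
  simp only [tInner, Finset.sum_apply, Pi.smul_apply, smul_eq_mul, sum_mul, mul_sum, mul_assoc]
  exact sum_comm

lemma tInner_comm (A B : (Fin m → Fin n) → ℝ) : tInner A B = tInner B A := by
  simp only [tInner, mul_comm]

lemma nucNorm_le_sum_abs {B : (Fin m → Fin n) → ℝ} {q : ℕ} (lam : Fin q → ℝ)
    (u : Fin q → EuclideanSpace ℝ (Fin n)) (hu : ∀ i, ‖u i‖ = 1)
    (hB : B = ∑ i, lam i • rankOne n m (u i)) :
    nucNorm B ≤ ∑ i, |lam i| := by
  refine csInf_le ⟨0, ?_⟩ ⟨q, lam, u, hu, hB, rfl⟩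
  rintro s ⟨q', lam', u', -, -, rfl⟩
  positivity

lemma tInner_le_nucNorm {A B : (Fin m → Fin n) → ℝ}
    (hA : ∀ u : EuclideanSpace ℝ (Fin n), ‖u‖ = 1 → |tInner A (rankOne n m u)| ≤ 1)
    {q : ℕ} (lam : Fin q → ℝ) (u : Fin q → EuclideanSpace ℝ (Fin n)) (hu : ∀ i, ‖u i‖ = 1)
    (hB : B = ∑ i, lam i • rankOne n m (u i)) :
    tInner A B ≤ nucNorm B := by
  refine le_csInf ⟨_, q, lam, u, hu, hB, rfl⟩ ?_
  rintro s ⟨q', lam', u', hu', rfl, rfl⟩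
  rw [tInner_comm, tInner_sum_smul_left]
  refine (le_abs_self _).trans <| (abs_sum_le_sum_abs _ _).trans <| sum_le_sum fun i _ => ?_
  rw [abs_mul, tInner_comm]
  exact mul_le_of_le_one_right (abs_nonneg _) (hA _ (hu' i))

lemma abs_tInner_sum_rankOne_le_one {r : ℕ} {w : Fin r → EuclideanSpace ℝ (Fin n)}
    (hw : Orthonormal ℝ w) (hm : 2 ≤ m) {s : Fin r → ℝ} (hs : ∀ j, |s j| ≤ 1)
    {u : EuclideanSpace ℝ (Fin n)} (hu : ‖u‖ = 1) :
    |tInner (∑ j, s j • rankOne n m (w j)) (rankOne n m u)| ≤ 1 := by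
  have bessel : ∑ j, |⟪w j, u⟫| ^ 2 ≤ 1 := by
    simpa [hu] using hw.sum_inner_products_le u (s := univ)
  have hle : ∀ j, |⟪w j, u⟫| ≤ 1 := fun j =>
    (sq_le_one_iff₀ (abs_nonneg _)).1 <|
      (single_le_sum (fun j _ => sq_nonneg |⟪w j, u⟫|) (mem_univ j)).trans bessel
  calc |tInner (∑ j, s j • rankOne n m (w j)) (rankOne n m u)|
      = |∑ j, s j * ⟪w j, u⟫ ^ m| := by
        simp only [tInner_sum_smul_left, tInner_rankOne_rankOne]
    _ ≤ ∑ j, |⟪w j, u⟫| ^ 2 := by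
        refine (abs_sum_le_sum_abs _ _).trans <| sum_le_sum fun j _ => ?_
        rw [abs_mul, abs_pow]
        exact (mul_le_of_le_one_left (by positivity) (hs j)).trans
          (pow_le_pow_of_le_one (abs_nonneg _) (hle j) hm)
    _ ≤ 1 := bessel

theorem nucNorm_sum_orthonormal {r : ℕ} {w : Fin r → EuclideanSpace ℝ (Fin n)}
    (hw : Orthonormal ℝ w) (hm : 2 ≤ m) (lam : Fin r → ℝ) :
    nucNorm (∑ j, lam j • rankOne n m (w j)) = ∑ j, |lam j| := by
  classical
  refine le_antisymm (nucNorm_le_sum_abs lam w hw.1 rfl) ?_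
  have hsign : ∀ j, |(SignType.sign (lam j) : ℝ)| ≤ 1 := fun j => by
    rcases SignType.sign (lam j) with _ | _ | _ <;> simp
  calc ∑ j, |lam j|
      = tInner (∑ j, (SignType.sign (lam j) : ℝ) • rankOne n m (w j))
          (∑ j, lam j • rankOne n m (w j)) := by
        simp only [tInner_sum_smul_left, tInner_comm (rankOne n m _) (∑ _, _),
          tInner_rankOne_rankOne, orthonormal_iff_ite.1 hw, ite_pow, one_pow,
          zero_pow (by omega : m ≠ 0), mul_ite, mul_one, mul_zero, sum_ite_eq',
          mem_univ, if_true, sign_mul_self]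
    _ ≤ _ := tInner_le_nucNorm
        (fun u hu => abs_tInner_sum_rankOne_le_one hw hm hsign hu) lam w hw.1 rfl

end NuclearNorm

lemma inner_toLp_indicator {ι : Type*} [DecidableEq ι] {n : ℕ} {k : ℝ} {y : ι → Fin n → ℝ}
    (h01 : ∀ i j, y i j = 0 ∨ y i j = 1) (hdisj : ∀ i i', i ≠ i' → ∀ j, y i j * y i' j = 0)
    (hsize : ∀ i, ∑ j, y i j = k) (i i' : ι) :
    ⟪WithLp.toLp 2 (y i), WithLp.toLp 2 (y i')⟫ = if i = i' then k else 0 := by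
  simp only [PiLp.inner_apply, RCLike.inner_apply, conj_trivial]
  split_ifs with h
  · subst h
    rw [← hsize i]
    exact sum_congr rfl fun j _ => by rcases h01 i j with hj | hj <;> simp [hj]
  · exact sum_eq_zero fun j _ => by rw [mul_comm]; exact hdisj i i' h j

lemma orthonormal_indicator {ι : Type*} {n : ℕ} {k : ℝ} (hk : 0 < k) {y : ι → Fin n → ℝ}
    (h01 : ∀ i j, y i j = 0 ∨ y i j = 1) (hdisj : ∀ i i', i ≠ i' → ∀ j, y i j * y i' j = 0)
    (hsize : ∀ i, ∑ j, y i j = k) :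
    Orthonormal ℝ fun i => (√k)⁻¹ • WithLp.toLp 2 (y i) := by
  classical
  refine orthonormal_iff_ite.2 fun i i' => ?_
  rw [real_inner_smul_left, real_inner_smul_right, inner_toLp_indicator h01 hdisj hsize]
  split_ifs
  · rw [← mul_assoc, ← mul_inv, Real.mul_self_sqrt hk.le, inv_mul_cancel₀ hk.ne']
  · simp

theorem nucNorm_agreement_general (n r k m : ℕ) (hk : 1 ≤ k) (hm : 2 ≤ m)
    (y : Fin r → Fin n → ℝ)
    (h01 : ∀ i j, y i j = 0 ∨ y i j = 1)
    (hdisj : ∀ i i', i ≠ i' → ∀ j, y i j * y i' j = 0)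
    (hsize : ∀ i, ∑ j : Fin n, y i j = (k : ℝ)) :
    nucNorm (fun idx : Fin m → Fin n => ∑ i : Fin r, ∏ t : Fin m, y i (idx t)) =
      (r : ℝ) * (k : ℝ) ^ ((m : ℝ) / 2) := by
  have hk0 : (0 : ℝ) < k := by exact_mod_cast hk
  have hsqrt : √(k : ℝ) ≠ 0 := (Real.sqrt_pos.2 hk0).ne'
  have hdecomp : (fun idx : Fin m → Fin n => ∑ i : Fin r, ∏ t : Fin m, y i (idx t)) =
      ∑ i, √(k : ℝ) ^ m • rankOne n m ((√(k : ℝ))⁻¹ • WithLp.toLp 2 (y i)) := by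
    ext idx
    simp [rankOne_smul, smul_smul, hsqrt, rankOne]
  rw [hdecomp, nucNorm_sum_orthonormal (orthonormal_indicator hk0 h01 hdisj hsize) hm,
    sum_const, card_univ, Fintype.card_fin, nsmul_eq_mul, abs_of_nonneg (by positivity),
    Real.sqrt_eq_rpow, ← Real.rpow_natCast, ← Real.rpow_mul hk0.le, one_div_mul_eq_div]

theorem nucNorm_agreement (n r k m : ℕ) (hr : 1 ≤ r) (hk : 1 ≤ k) (hm : 2 ≤ m)
    (y : Fin r → Fin n → ℝ)
    (h01 : ∀ i j, y i j = 0 ∨ y i j = 1)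
    (hdisj : ∀ i i', i ≠ i' → ∀ j, y i j * y i' j = 0)
    (hsize : ∀ i, ∑ j : Fin n, y i j = (k : ℝ)) :
    nucNorm (fun idx : Fin m → Fin n => ∑ i : Fin r, ∏ t : Fin m, y i (idx t)) =
      (r : ℝ) * (k : ℝ) ^ ((m : ℝ) / 2) :=
  nucNorm_agreement_general n r k m hk hm y h01 hdisj hsize
end
end

section
/- Let Y* be the agreement tensor of r disjoint clusters of size k in [n] (model order m ≥ 2), and let A be any m-th order tensor with E[A] = q·1^{⊗m} + (p−q)·Y* for reals 0 ≤ q < p ≤ 1. For any tensor Y with entries in [0,1] satisfying ⟨1^{⊗m}, Y⟩ = r·k^m, one has ⟨E[A], Y* − Y⟩ = (1/2)(p−q)·‖Y* − Y‖_1. -/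
open scoped BigOperators

noncomputable section

/-- Entrywise `L1` norm. -/
def tNormOne {n m : ℕ} (B : (Fin m → Fin n) → ℝ) : ℝ :=
  ∑ i : Fin m → Fin n, |B i|

theorem expected_adjacency_inner (n r k m : ℕ) (hk : 1 ≤ k) (hm : 2 ≤ m)
    (p q : ℝ) (hq : 0 ≤ q) (hqp : q < p) (hp : p ≤ 1)
    (y : Fin r → Fin n → ℝ)
    (h01 : ∀ i j, y i j = 0 ∨ y i j = 1)
    (hdisj : ∀ i i', i ≠ i' → ∀ j, y i j * y i' j = 0)
    (hsize : ∀ i, ∑ j : Fin n, y i j = (k : ℝ))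
    (EA : (Fin m → Fin n) → ℝ)
    (hEA : EA = fun idx => q + (p - q) * ∑ i : Fin r, ∏ t : Fin m, y i (idx t))
    (Y : (Fin m → Fin n) → ℝ)
    (hY0 : ∀ idx, 0 ≤ Y idx) (hY1 : ∀ idx, Y idx ≤ 1)
    (hYsum : tInner (fun _ => (1 : ℝ)) Y = (r : ℝ) * (k : ℝ) ^ m) :
    tInner EA (fun idx => (∑ i : Fin r, ∏ t : Fin m, y i (idx t)) - Y idx) =
      (1 / 2) * (p - q) *
        tNormOne (fun idx => (∑ i : Fin r, ∏ t : Fin m, y i (idx t)) - Y idx) := by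
  subst hEA
  have hmpos : 0 < m := by omega
  set Ys : (Fin m → Fin n) → ℝ := fun idx => ∑ i : Fin r, ∏ t : Fin m, y i (idx t)
    with hYsdef
  -- each summand is 0 or 1
  have hterm : ∀ i (idx : Fin m → Fin n),
      (∏ t : Fin m, y i (idx t)) = 0 ∨ (∏ t : Fin m, y i (idx t)) = 1 := by
    intro i idx
    by_cases h : ∀ t, y i (idx t) = 1
    · right; exact Finset.prod_eq_one fun t _ => h t
    · left
      push_neg at h
      obtain ⟨t, ht⟩ := h
      have h0 : y i (idx t) = 0 := (h01 i (idx t)).resolve_right ht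
      exact Finset.prod_eq_zero (Finset.mem_univ t) h0
  -- Ys is 0/1 valued
  have h01' : ∀ idx, Ys idx = 0 ∨ Ys idx = 1 := by
    intro idx
    by_cases h : ∃ i, (∏ t : Fin m, y i (idx t)) = 1
    · right
      obtain ⟨i0, hi0⟩ := h
      have hz : ∀ i ∈ Finset.univ, i ≠ i0 → (∏ t : Fin m, y i (idx t)) = 0 := by
        intro i _ hne
        rcases hterm i idx with h0 | h1
        · exact h0
        · exfalso
          set t0 : Fin m := ⟨0, hmpos⟩
          have hy1 : y i (idx t0) = 1 := by
            rcases h01 i (idx t0) with hz0 | ho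
            · exact absurd (Finset.prod_eq_zero (Finset.mem_univ t0) hz0) (by rw [h1]; norm_num)
            · exact ho
          have hy2 : y i0 (idx t0) = 1 := by
            rcases h01 i0 (idx t0) with hz0 | ho
            · exact absurd (Finset.prod_eq_zero (Finset.mem_univ t0) hz0) (by rw [hi0]; norm_num)
            · exact ho
          have := hdisj i i0 hne (idx t0)
          rw [hy1, hy2] at this; norm_num at this
      have : Ys idx = ∏ t : Fin m, y i0 (idx t) :=
        Finset.sum_eq_single i0 hz (fun h => absurd (Finset.mem_univ i0) h)
      rw [this, hi0]
    · left
      push_neg at h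
      apply Finset.sum_eq_zero
      intro i _
      exact (hterm i idx).resolve_right (h i)
  -- sum of Ys
  have hYsSum : ∑ idx : Fin m → Fin n, Ys idx = (r : ℝ) * (k : ℝ) ^ m := by
    rw [hYsdef]
    rw [Finset.sum_comm]
    have : ∀ i : Fin r, ∑ idx : Fin m → Fin n, ∏ t : Fin m, y i (idx t) = (k : ℝ) ^ m := by
      intro i
      rw [← Fintype.sum_pow (fun j => y i j) m, hsize i]
    simp only [this, Finset.sum_const, Finset.card_univ, Fintype.card_fin, nsmul_eq_mul]
  -- sum of differences is zero
  have hdiff : ∑ idx : Fin m → Fin n, (Ys idx - Y idx) = 0 := by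
    rw [Finset.sum_sub_distrib, hYsSum]
    have : ∑ idx : Fin m → Fin n, Y idx = (r : ℝ) * (k : ℝ) ^ m := by
      simpa [tInner] using hYsum
    rw [this, sub_self]
  -- pointwise identity: Ys * d = (|d| + d)/2
  have hpt : ∀ idx, Ys idx * (Ys idx - Y idx) =
      (|Ys idx - Y idx| + (Ys idx - Y idx)) / 2 := by
    intro idx
    rcases h01' idx with h0 | h1
    · rw [h0]
      have : |0 - Y idx| = Y idx := by
        rw [zero_sub, abs_neg, abs_of_nonneg (hY0 idx)]
      rw [this]; ring
    · rw [h1]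
      have : |1 - Y idx| = 1 - Y idx := abs_of_nonneg (by linarith [hY1 idx])
      rw [this]; ring
  have hhalf : ∑ idx : Fin m → Fin n, Ys idx * (Ys idx - Y idx) =
      (1 / 2) * ∑ idx : Fin m → Fin n, |Ys idx - Y idx| := by
    calc ∑ idx : Fin m → Fin n, Ys idx * (Ys idx - Y idx)
        = ∑ idx : Fin m → Fin n, (|Ys idx - Y idx| + (Ys idx - Y idx)) / 2 :=
          Finset.sum_congr rfl fun idx _ => hpt idx
      _ = ((∑ idx : Fin m → Fin n, |Ys idx - Y idx|) +
            ∑ idx : Fin m → Fin n, (Ys idx - Y idx)) / 2 := by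
          rw [← Finset.sum_add_distrib, Finset.sum_div]
      _ = (1 / 2) * ∑ idx : Fin m → Fin n, |Ys idx - Y idx| := by
          rw [hdiff]; ring
  show ∑ idx : Fin m → Fin n, (q + (p - q) * Ys idx) * (Ys idx - Y idx) =
      (1 / 2) * (p - q) * ∑ idx : Fin m → Fin n, |Ys idx - Y idx|
  have : ∀ idx : Fin m → Fin n, (q + (p - q) * Ys idx) * (Ys idx - Y idx) =
      q * (Ys idx - Y idx) + (p - q) * (Ys idx * (Ys idx - Y idx)) := by
    intro idx; ring
  rw [Finset.sum_congr rfl fun idx _ => this idx, Finset.sum_add_distrib,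
    ← Finset.mul_sum, ← Finset.mul_sum, hdiff, hhalf]
  ring
end
end
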